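/- Fix an integer n ≥ 2, d ∈ D, and H̄ ∈ ℝ. For every measurable function m : [0,1] → (0,∞) such that z ↦ log m(z) is integrable and −∫_0^1 log m(z) dz ≤ H̄, one has ∫_0^1 a(z; d) m(z) dz ≥ exp(−H̄ + ∫_0^1 log a(z; d) dz), with equality for m*(z) = exp(−H̄ + ∫_0^1 log a(z'; d) dz') / a(z; d). Hence the adversary's minimum value equals exp(−H̄ + ∫_0^1 log a(z; d) dz). -/

import Mathlib

open MeasureTheory Finset

/-- The function `a(z; d)` from the tournament model. -/
noncomputable def aFun (n : ℕ) (d : ℕ → ℝ) (z : ℝ) : ℝ :=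
  ∑ r ∈ Finset.Icc 1 (n - 1),
    (r : ℝ) * ((n - 1).choose r : ℝ) * z ^ (n - r - 1) * (1 - z) ^ (r - 1) * d r

/-- The feasible set `D` of prize-differential vectors. -/
def feasible (n : ℕ) (d : ℕ → ℝ) : Prop :=
  (∀ r ∈ Finset.Icc 1 (n - 1), 0 ≤ d r) ∧
    ∑ r ∈ Finset.Icc 1 (n - 1), (r : ℝ) * d r = 1

/-- Constraint set of the adversary: positive inverse quantile densities `m` on `(0,1)`
whose log is integrable and whose Shannon entropy `−∫₀¹ log m` is at most `H̄`. -/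
def Adversarial (Hbar : ℝ) (m : ℝ → ℝ) : Prop :=
  Measurable m ∧ (∀ z ∈ Set.Ioo (0:ℝ) 1, 0 < m z) ∧
    IntegrableOn (fun z => Real.log (m z)) (Set.Ioo (0:ℝ) 1) ∧
    -∫ z in Set.Ioo (0:ℝ) 1, Real.log (m z) ≤ Hbar

lemma neg_log_le (z : ℝ) (hz : 0 < z) : -Real.log z ≤ 2 * z ^ (-(1:ℝ)/2) := by
  have hw : (0:ℝ) < z ^ ((1:ℝ)/2) := Real.rpow_pos_of_pos hz _
  have h1 : Real.log (z ^ ((1:ℝ)/2)) = (1/2) * Real.log z := Real.log_rpow hz _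
  have h3 : Real.log (z ^ ((1:ℝ)/2))⁻¹ ≤ (z ^ ((1:ℝ)/2))⁻¹ - 1 :=
    Real.log_le_sub_one_of_pos (inv_pos.2 hw)
  rw [Real.log_inv] at h3
  have h4 : (z ^ ((1:ℝ)/2))⁻¹ = z ^ (-(1:ℝ)/2) := by
    rw [← Real.rpow_neg hz.le]; norm_num
  rw [h4, h1] at h3
  have h5 : (0:ℝ) ≤ z ^ (-(1:ℝ)/2) := Real.rpow_nonneg hz.le _
  linarith

lemma log_ii01 : IntervalIntegrable Real.log MeasureTheory.volume 0 1 := by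
  rw [intervalIntegrable_iff']
  have hg : IntegrableOn (fun z : ℝ => 2 * z ^ (-(1:ℝ)/2)) (Set.uIcc (0:ℝ) 1) volume := by
    have h := (intervalIntegral.intervalIntegrable_rpow' (a := (0:ℝ)) (b := 1)
      (r := -(1:ℝ)/2) (by norm_num))
    rw [intervalIntegrable_iff'] at h
    exact h.const_mul 2
  apply hg.mono' Real.measurable_log.aestronglyMeasurable
  filter_upwards [ae_restrict_mem measurableSet_uIcc] with z hz
  rw [Set.uIcc_of_le (by norm_num : (0:ℝ) ≤ 1)] at hz
  rcases eq_or_lt_of_le hz.1 with h0 | h0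
  · rw [← h0]
    simp [Real.zero_rpow (show -(1:ℝ)/2 ≠ 0 by norm_num)]
  · rw [Real.norm_eq_abs, abs_of_nonpos (Real.log_nonpos h0.le hz.2)]
    exact neg_log_le z h0

lemma log_int01 : IntegrableOn Real.log (Set.Ioo (0:ℝ) 1) volume := by
  have := (intervalIntegrable_iff' (f := Real.log) (a := 0) (b := 1) (μ := volume)).1 log_ii01
  rw [Set.uIcc_of_le (by norm_num : (0:ℝ) ≤ 1)] at this
  exact this.mono_set Set.Ioo_subset_Icc_self

lemma log_one_sub_int01 : IntegrableOn (fun z => Real.log (1 - z)) (Set.Ioo (0:ℝ) 1) volume := by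
  have h := log_ii01.comp_sub_left 1
  norm_num at h
  rw [intervalIntegrable_iff'] at h
  rw [Set.uIcc_of_ge (by norm_num : (1:ℝ) ≥ 0)] at h
  exact h.mono_set Set.Ioo_subset_Icc_self

lemma aFun_continuous (n : ℕ) (d : ℕ → ℝ) : Continuous (aFun n d) := by
  unfold aFun
  exact continuous_finset_sum _ fun r _ => by fun_prop

lemma aFun_measurable (n : ℕ) (d : ℕ → ℝ) : Measurable (aFun n d) :=
  (aFun_continuous n d).measurable

lemma exists_pos_index (n : ℕ) (d : ℕ → ℝ) (hd : feasible n d) :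
    ∃ r0 ∈ Finset.Icc 1 (n - 1), 0 < d r0 := by
  obtain ⟨hdnn, hsum⟩ := hd
  by_contra h
  push_neg at h
  have h0 : ∑ r ∈ Finset.Icc 1 (n - 1), (r : ℝ) * d r = 0 :=
    Finset.sum_eq_zero fun r hr => by
      have : d r = 0 := le_antisymm (h r hr) (hdnn r hr)
      rw [this, mul_zero]
  rw [h0] at hsum; norm_num at hsum

lemma term_nonneg (n : ℕ) (d : ℕ → ℝ) (hdnn : ∀ r ∈ Finset.Icc 1 (n - 1), 0 ≤ d r)
    {z : ℝ} (hz : z ∈ Set.Ioo (0:ℝ) 1) :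
    ∀ r ∈ Finset.Icc 1 (n - 1),
      0 ≤ (r : ℝ) * ((n - 1).choose r : ℝ) * z ^ (n - r - 1) * (1 - z) ^ (r - 1) * d r := by
  intro r hr
  have h1 : (0:ℝ) < z := hz.1
  have h2 : (0:ℝ) < 1 - z := by linarith [hz.2]
  have := hdnn r hr
  positivity

lemma aFun_lower (n : ℕ) (hn : 2 ≤ n) (d : ℕ → ℝ)
    (hdnn : ∀ r ∈ Finset.Icc 1 (n - 1), 0 ≤ d r)
    {r0 : ℕ} (hr0 : r0 ∈ Finset.Icc 1 (n - 1)) {z : ℝ} (hz : z ∈ Set.Ioo (0:ℝ) 1) :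
    (r0 : ℝ) * ((n - 1).choose r0 : ℝ) * d r0 * (z * (1 - z)) ^ (n - 2) ≤ aFun n d z := by
  obtain ⟨hr1, hr2⟩ := Finset.mem_Icc.1 hr0
  have hz0 : (0:ℝ) < z := hz.1
  have hz1 : (0:ℝ) < 1 - z := by linarith [hz.2]
  have step1 : (r0 : ℝ) * ((n - 1).choose r0 : ℝ) * z ^ (n - r0 - 1) * (1 - z) ^ (r0 - 1) * d r0
      ≤ aFun n d z :=
    Finset.single_le_sum (term_nonneg n d hdnn hz) hr0
  have key : (z * (1 - z)) ^ (n - 2) ≤ z ^ (n - r0 - 1) * (1 - z) ^ (r0 - 1) := by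
    rw [mul_pow]
    exact mul_le_mul (pow_le_pow_of_le_one hz0.le (by linarith [hz.2]) (by omega))
      (pow_le_pow_of_le_one hz1.le (by linarith [hz.1]) (by omega))
      (pow_nonneg hz1.le _) (pow_nonneg hz0.le _)
  have hA : (0:ℝ) ≤ (r0 : ℝ) * ((n - 1).choose r0 : ℝ) * d r0 := by
    have := hdnn r0 hr0; positivity
  calc (r0 : ℝ) * ((n - 1).choose r0 : ℝ) * d r0 * (z * (1 - z)) ^ (n - 2)
      ≤ (r0 : ℝ) * ((n - 1).choose r0 : ℝ) * d r0 * (z ^ (n - r0 - 1) * (1 - z) ^ (r0 - 1)) :=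
        mul_le_mul_of_nonneg_left key hA
    _ = (r0 : ℝ) * ((n - 1).choose r0 : ℝ) * z ^ (n - r0 - 1) * (1 - z) ^ (r0 - 1) * d r0 := by
        ring
    _ ≤ aFun n d z := step1

lemma aFun_upper (n : ℕ) (d : ℕ → ℝ) (hdnn : ∀ r ∈ Finset.Icc 1 (n - 1), 0 ≤ d r)
    {z : ℝ} (hz : z ∈ Set.Ioo (0:ℝ) 1) :
    aFun n d z ≤ ∑ r ∈ Finset.Icc 1 (n - 1), (r : ℝ) * ((n - 1).choose r : ℝ) * d r := by
  apply Finset.sum_le_sum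
  intro r hr
  have hz0 : (0:ℝ) < z := hz.1
  have hz1 : (0:ℝ) < 1 - z := by linarith [hz.2]
  have hdr := hdnn r hr
  have h1 : z ^ (n - r - 1) ≤ 1 := pow_le_one₀ hz0.le (by linarith [hz.2])
  have h2 : (1 - z) ^ (r - 1) ≤ 1 := pow_le_one₀ hz1.le (by linarith [hz.1])
  calc (r : ℝ) * ((n - 1).choose r : ℝ) * z ^ (n - r - 1) * (1 - z) ^ (r - 1) * d r
      ≤ (r : ℝ) * ((n - 1).choose r : ℝ) * 1 * 1 * d r := by
        apply mul_le_mul_of_nonneg_right _ hdr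
        apply mul_le_mul (mul_le_mul_of_nonneg_left h1 (by positivity)) h2
          (pow_nonneg hz1.le _) (by positivity)
    _ = (r : ℝ) * ((n - 1).choose r : ℝ) * d r := by ring

lemma choose_term_pos (n : ℕ) {r0 : ℕ} (hr0 : r0 ∈ Finset.Icc 1 (n - 1)) (d : ℕ → ℝ)
    (hdr0 : 0 < d r0) : 0 < (r0 : ℝ) * ((n - 1).choose r0 : ℝ) * d r0 := by
  obtain ⟨hr1, hr2⟩ := Finset.mem_Icc.1 hr0
  have h1 : (0:ℝ) < (r0 : ℝ) := by exact_mod_cast by omega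
  have h2 : 0 < (n - 1).choose r0 := Nat.choose_pos hr2
  have h2' : (0:ℝ) < ((n - 1).choose r0 : ℝ) := by exact_mod_cast h2
  positivity

lemma aFun_pos (n : ℕ) (hn : 2 ≤ n) (d : ℕ → ℝ) (hd : feasible n d)
    {z : ℝ} (hz : z ∈ Set.Ioo (0:ℝ) 1) : 0 < aFun n d z := by
  obtain ⟨r0, hr0, hdr0⟩ := exists_pos_index n d hd
  have hc := choose_term_pos n hr0 d hdr0
  have hzz : (0:ℝ) < z * (1 - z) := mul_pos hz.1 (by linarith [hz.2])
  exact lt_of_lt_of_le (by positivity) (aFun_lower n hn d hd.1 hr0 hz)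

lemma aFun_log_integrable (n : ℕ) (hn : 2 ≤ n) (d : ℕ → ℝ) (hd : feasible n d) :
    IntegrableOn (fun z => Real.log (aFun n d z)) (Set.Ioo (0:ℝ) 1) volume := by
  obtain ⟨r0, hr0, hdr0⟩ := exists_pos_index n d hd
  set c := (r0 : ℝ) * ((n - 1).choose r0 : ℝ) * d r0 with hcdef
  have hcpos : 0 < c := choose_term_pos n hr0 d hdr0
  set M := ∑ r ∈ Finset.Icc 1 (n - 1), (r : ℝ) * ((n - 1).choose r : ℝ) * d r with hMdef
  have hhalf : (1/2 : ℝ) ∈ Set.Ioo (0:ℝ) 1 := by norm_num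
  have hMpos : 0 < M := by
    refine lt_of_lt_of_le ?_ ((aFun_lower n hn d hd.1 hr0 hhalf).trans
      (aFun_upper n d hd.1 hhalf))
    have : (0:ℝ) < (1/2 : ℝ) * (1 - 1/2) := by norm_num
    positivity
  have gint : IntegrableOn (fun z => (|Real.log M| + |Real.log c|) +
      ((n - 2 : ℕ) : ℝ) * (‖Real.log z‖ + ‖Real.log (1 - z)‖)) (Set.Ioo (0:ℝ) 1) volume := by
    refine (integrableOn_const ?_).add
      (((log_int01.norm.add log_one_sub_int01.norm).const_mul _))
    rw [Real.volume_Ioo]; norm_num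
  apply gint.mono' (Real.measurable_log.comp (aFun_measurable n d)).aestronglyMeasurable
  filter_upwards [ae_restrict_mem measurableSet_Ioo] with z hz
  have hz1 : (0:ℝ) < 1 - z := by linarith [hz.2]
  have hzz : (0:ℝ) < z * (1 - z) := mul_pos hz.1 hz1
  have hlow := aFun_lower n hn d hd.1 hr0 hz
  have hup := aFun_upper n d hd.1 hz
  have hlowpos : (0:ℝ) < c * (z * (1 - z)) ^ (n - 2) := by positivity
  have hapos : 0 < aFun n d z := lt_of_lt_of_le hlowpos hlow
  have hL : Real.log (c * (z * (1 - z)) ^ (n - 2)) ≤ Real.log (aFun n d z) :=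
    Real.log_le_log hlowpos hlow
  have hU : Real.log (aFun n d z) ≤ Real.log M := Real.log_le_log hapos hup
  have hexp : Real.log (c * (z * (1 - z)) ^ (n - 2))
      = Real.log c + ((n - 2 : ℕ) : ℝ) * (Real.log z + Real.log (1 - z)) := by
    rw [Real.log_mul hcpos.ne' (by positivity), Real.log_pow,
      Real.log_mul hz.1.ne' hz1.ne']
  rw [hexp] at hL
  simp only [Real.norm_eq_abs, Function.comp_apply]
  have hk : (0:ℝ) ≤ ((n - 2 : ℕ) : ℝ) := Nat.cast_nonneg _
  have e1 : -( |Real.log z| + |Real.log (1 - z)| ) ≤ Real.log z + Real.log (1 - z) := by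
    have := neg_abs_le (Real.log z); have := neg_abs_le (Real.log (1 - z)); linarith
  have e2 : ((n - 2 : ℕ) : ℝ) * -( |Real.log z| + |Real.log (1 - z)| )
      ≤ ((n - 2 : ℕ) : ℝ) * (Real.log z + Real.log (1 - z)) :=
    mul_le_mul_of_nonneg_left e1 hk
  have e3 : (0:ℝ) ≤ ((n - 2 : ℕ) : ℝ) * (|Real.log z| + |Real.log (1 - z)|) := by positivity
  rw [abs_le]
  constructor
  · have := neg_abs_le (Real.log c)
    have := abs_nonneg (Real.log M)
    nlinarith
  · have := le_abs_self (Real.log M)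
    have := abs_nonneg (Real.log c)
    linarith

/-- for every admissible `m`,
`∫₀¹ a(z; d) m(z) dz ≥ exp(−H̄ + ∫₀¹ log a(z; d) dz)`, with equality at
`m*(z) = exp(−H̄ + ∫₀¹ log a) / a(z; d)`; hence the adversary's minimum value equals
`exp(−H̄ + ∫₀¹ log a(z; d) dz)`. -/
theorem adversary_minimum_value (n : ℕ) (hn : 2 ≤ n) (d : ℕ → ℝ) (hd : feasible n d)
    (Hbar : ℝ) :
    (∀ m : ℝ → ℝ, Adversarial Hbar m →
      ENNReal.ofReal (Real.exp (-Hbar + ∫ z in Set.Ioo (0:ℝ) 1, Real.log (aFun n d z)))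
        ≤ ∫⁻ z in Set.Ioo (0:ℝ) 1, ENNReal.ofReal (aFun n d z * m z)) ∧
    ((∫⁻ z in Set.Ioo (0:ℝ) 1, ENNReal.ofReal (aFun n d z *
          (Real.exp (-Hbar + ∫ z' in Set.Ioo (0:ℝ) 1, Real.log (aFun n d z')) /
            aFun n d z)))
        = ENNReal.ofReal
            (Real.exp (-Hbar + ∫ z in Set.Ioo (0:ℝ) 1, Real.log (aFun n d z)))) ∧
    sInf {I : ENNReal | ∃ m : ℝ → ℝ, Adversarial Hbar m ∧
        I = ∫⁻ z in Set.Ioo (0:ℝ) 1, ENNReal.ofReal (aFun n d z * m z)}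
      = ENNReal.ofReal
          (Real.exp (-Hbar + ∫ z in Set.Ioo (0:ℝ) 1, Real.log (aFun n d z))) := by
  set s : Set ℝ := Set.Ioo (0:ℝ) 1 with hs
  have hsm : MeasurableSet s := measurableSet_Ioo
  haveI hprob : IsProbabilityMeasure (volume.restrict s) :=
    ⟨by rw [Measure.restrict_apply_univ]; simp [hs, Real.volume_Ioo]⟩
  have hLa : IntegrableOn (fun z => Real.log (aFun n d z)) s volume :=
    aFun_log_integrable n hn d hd
  have hapos : ∀ z ∈ s, 0 < aFun n d z := fun z hz => aFun_pos n hn d hd hz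
  set Ia := ∫ z in s, Real.log (aFun n d z) with hIa
  set E := Real.exp (-Hbar + Ia) with hE
  have part1 : ∀ m : ℝ → ℝ, Adversarial Hbar m →
      ENNReal.ofReal E ≤ ∫⁻ z in s, ENNReal.ofReal (aFun n d z * m z) := by
    intro m hm
    obtain ⟨hmeas, hmpos, hmint, hment⟩ := hm
    by_cases htop : (∫⁻ z in s, ENNReal.ofReal (aFun n d z * m z)) = ⊤
    · rw [htop]; exact le_top
    set h : ℝ → ℝ := fun z => aFun n d z * m z with hh
    have hhm : Measurable h := (aFun_measurable n d).mul hmeas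
    have hpos : ∀ᵐ z ∂(volume.restrict s), 0 < h z := by
      filter_upwards [ae_restrict_mem hsm] with z hz
      exact mul_pos (hapos z hz) (hmpos z hz)
    have h_nn : 0 ≤ᵐ[volume.restrict s] h := hpos.mono fun z hz => hz.le
    have hint : Integrable h (volume.restrict s) :=
      ⟨hhm.aestronglyMeasurable,
        (hasFiniteIntegral_iff_ofReal h_nn).2 (lt_top_iff_ne_top.2 htop)⟩
    have hlog_eq : (fun z => Real.log (h z)) =ᵐ[volume.restrict s]
        fun z => Real.log (aFun n d z) + Real.log (m z) := by
      filter_upwards [ae_restrict_mem hsm] with z hz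
      exact Real.log_mul (hapos z hz).ne' (hmpos z hz).ne'
    have hlogint : Integrable (fun z => Real.log (h z)) (volume.restrict s) :=
      (hLa.add hmint).congr hlog_eq.symm
    have hexp_eq : (fun z => Real.exp (Real.log (h z))) =ᵐ[volume.restrict s] h := by
      filter_upwards [hpos] with z hz; exact Real.exp_log hz
    have hexpint : Integrable (fun z => Real.exp (Real.log (h z))) (volume.restrict s) :=
      hint.congr hexp_eq.symm
    have hJ := convexOn_exp.map_integral_le (μ := volume.restrict s)
      (f := fun z => Real.log (h z))
      Real.continuous_exp.continuousOn isClosed_univ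
      (Filter.Eventually.of_forall fun _ => Set.mem_univ _) hlogint hexpint
    rw [integral_congr_ae hexp_eq] at hJ
    have hsplit : ∫ z in s, Real.log (h z) = Ia + ∫ z in s, Real.log (m z) := by
      rw [integral_congr_ae hlog_eq, integral_add hLa hmint]
    have hexp_le : E ≤ ∫ z in s, h z := by
      refine le_trans ?_ hJ
      apply Real.exp_le_exp.2
      rw [hsplit]; linarith
    calc ENNReal.ofReal E ≤ ENNReal.ofReal (∫ z in s, h z) :=
          ENNReal.ofReal_le_ofReal hexp_le
      _ = ∫⁻ z in s, ENNReal.ofReal (h z) := ofReal_integral_eq_lintegral_ofReal hint h_nn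
  have part2 : (∫⁻ z in s, ENNReal.ofReal (aFun n d z * (E / aFun n d z)))
      = ENNReal.ofReal E := by
    rw [setLIntegral_congr_fun (f := fun z => ENNReal.ofReal (aFun n d z * (E / aFun n d z)))
      (g := fun _ => ENNReal.ofReal E) hsm
      (fun z hz => by
        show ENNReal.ofReal (aFun n d z * (E / aFun n d z)) = ENNReal.ofReal E
        rw [mul_comm, div_mul_cancel₀ _ (hapos z hz).ne']),
      setLIntegral_const]
    simp [hs, Real.volume_Ioo]
  have hadv : Adversarial Hbar (fun z => E / aFun n d z) := by
    refine ⟨measurable_const.div (aFun_measurable n d),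
      fun z hz => div_pos (Real.exp_pos _) (hapos z hz), ?_, ?_⟩
    · apply ((integrable_const (Real.log E)).sub hLa).congr
      filter_upwards [ae_restrict_mem hsm] with z hz
      exact (Real.log_div (Real.exp_ne_zero _) (hapos z hz).ne').symm
    · have hcongr : (fun z => Real.log (E / aFun n d z)) =ᵐ[volume.restrict s]
          fun z => Real.log E - Real.log (aFun n d z) := by
        filter_upwards [ae_restrict_mem hsm] with z hz
        exact Real.log_div (Real.exp_ne_zero _) (hapos z hz).ne'
      rw [integral_congr_ae hcongr, integral_sub (integrable_const _) hLa, integral_const]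
      simp [hE, Real.log_exp, hIa]
  refine ⟨part1, part2, le_antisymm (sInf_le ⟨_, hadv, part2.symm⟩) (le_sInf ?_)⟩
  rintro I ⟨m, hm, rfl⟩
  exact part1 m hm
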